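/- There exists a constant H > 0 such that for every θ ∈ ℝ there is a sign ε ∈ {+1, −1} with |φ_θ(x + iεH)| ≥ 1 for all x ∈ ℝ. -/

import Mathlib

noncomputable def c₁ (θ : ℝ) : ℝ := Real.cos (θ - Real.pi / 2)
noncomputable def c₂ (θ : ℝ) : ℝ := Real.cos (θ - 7 * Real.pi / 6)
noncomputable def c₃ (θ : ℝ) : ℝ := Real.cos (θ + Real.pi / 6)

/-- The entire function `φ_θ(z) = e^{−ic₁z} + e^{−ic₂z} + e^{−ic₃z}`. -/
noncomputable def phiE (θ : ℝ) (z : ℂ) : ℂ :=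
  Complex.exp (-Complex.I * (c₁ θ : ℂ) * z) +
    Complex.exp (-Complex.I * (c₂ θ : ℂ) * z) +
    Complex.exp (-Complex.I * (c₃ θ : ℂ) * z)

/-- Sorted version of the gap dichotomy for triples with zero sum and
square-sum `3/2`. -/
lemma phi_sorted_key (p q r : ℝ) (hqp : q ≤ p) (hrq : r ≤ q)
    (hsum : p + q + r = 0) (hsq : p^2 + q^2 + r^2 = 3/2) :
    (1/2 ≤ p ∧ q ≤ p - Real.sqrt 3 / 2 ∧ r ≤ p - Real.sqrt 3 / 2) ∨
    (1/2 ≤ -r ∧ -q ≤ -r - Real.sqrt 3 / 2 ∧ -p ≤ -r - Real.sqrt 3 / 2) := by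
  have h3 : Real.sqrt 3 ^ 2 = 3 := Real.sq_sqrt (by norm_num)
  have h0 : (0:ℝ) ≤ Real.sqrt 3 := Real.sqrt_nonneg 3
  have hp : 1/2 ≤ p := by
    nlinarith [sq_nonneg (p-q), sq_nonneg (q-r), sq_nonneg (p+2*q), sq_nonneg (2*p+q)]
  have hr : 1/2 ≤ -r := by
    nlinarith [sq_nonneg (p-q), sq_nonneg (q-r), sq_nonneg (r+2*q), sq_nonneg (2*r+q)]
  rcases le_or_gt (Real.sqrt 3 / 2) (p - q) with h | h
  · exact Or.inl ⟨hp, by linarith, by linarith⟩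
  · have hs : Real.sqrt 3 / 2 ≤ q - r := by
      nlinarith [sq_nonneg (p - q), sq_nonneg (q - r)]
    exact Or.inr ⟨hr, by linarith, by linarith⟩

/-- Full (unsorted) key dichotomy. -/
lemma phi_key (u v w : ℝ) (hsum : u + v + w = 0) (hsq : u^2 + v^2 + w^2 = 3/2) :
    ∃ ε : ℝ, (ε = 1 ∨ ε = -1) ∧
      ((1/2 ≤ ε*u ∧ ε*v ≤ ε*u - Real.sqrt 3/2 ∧ ε*w ≤ ε*u - Real.sqrt 3/2) ∨
       (1/2 ≤ ε*v ∧ ε*u ≤ ε*v - Real.sqrt 3/2 ∧ ε*w ≤ ε*v - Real.sqrt 3/2) ∨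
       (1/2 ≤ ε*w ∧ ε*u ≤ ε*w - Real.sqrt 3/2 ∧ ε*v ≤ ε*w - Real.sqrt 3/2)) := by
  have skey := phi_sorted_key
  rcases le_total u v with h1 | h1 <;> rcases le_total v w with h2 | h2 <;>
    rcases le_total u w with h3 | h3
  · rcases skey w v u h2 h1 (by linarith) (by linarith) with ⟨g1,g2,g3⟩|⟨g1,g2,g3⟩
    · exact ⟨1, Or.inl rfl, Or.inr (Or.inr ⟨by linarith, by linarith, by linarith⟩)⟩
    · exact ⟨-1, Or.inr rfl, Or.inl ⟨by linarith, by linarith, by linarith⟩⟩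
  · exfalso
    have hu : u = 0 := by linarith
    have hv : v = 0 := by linarith
    have hw : w = 0 := by linarith
    rw [hu, hv, hw] at hsq; norm_num at hsq
  · rcases skey v w u h2 h3 (by linarith) (by linarith) with ⟨g1,g2,g3⟩|⟨g1,g2,g3⟩
    · exact ⟨1, Or.inl rfl, Or.inr (Or.inl ⟨by linarith, by linarith, by linarith⟩)⟩
    · exact ⟨-1, Or.inr rfl, Or.inl ⟨by linarith, by linarith, by linarith⟩⟩
  · rcases skey v u w h1 h3 (by linarith) (by linarith) with ⟨g1,g2,g3⟩|⟨g1,g2,g3⟩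
    · exact ⟨1, Or.inl rfl, Or.inr (Or.inl ⟨by linarith, by linarith, by linarith⟩)⟩
    · exact ⟨-1, Or.inr rfl, Or.inr (Or.inr ⟨by linarith, by linarith, by linarith⟩)⟩
  · rcases skey w u v h3 h1 (by linarith) (by linarith) with ⟨g1,g2,g3⟩|⟨g1,g2,g3⟩
    · exact ⟨1, Or.inl rfl, Or.inr (Or.inr ⟨by linarith, by linarith, by linarith⟩)⟩
    · exact ⟨-1, Or.inr rfl, Or.inr (Or.inl ⟨by linarith, by linarith, by linarith⟩)⟩
  · rcases skey u w v h3 h2 (by linarith) (by linarith) with ⟨g1,g2,g3⟩|⟨g1,g2,g3⟩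
    · exact ⟨1, Or.inl rfl, Or.inl ⟨by linarith, by linarith, by linarith⟩⟩
    · exact ⟨-1, Or.inr rfl, Or.inr (Or.inl ⟨by linarith, by linarith, by linarith⟩)⟩
  · exfalso
    have hu : u = 0 := by linarith
    have hv : v = 0 := by linarith
    have hw : w = 0 := by linarith
    rw [hu, hv, hw] at hsq; norm_num at hsq
  · rcases skey u v w h1 h2 (by linarith) (by linarith) with ⟨g1,g2,g3⟩|⟨g1,g2,g3⟩
    · exact ⟨1, Or.inl rfl, Or.inl ⟨by linarith, by linarith, by linarith⟩⟩
    · exact ⟨-1, Or.inr rfl, Or.inr (Or.inr ⟨by linarith, by linarith, by linarith⟩)⟩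

/-- The dominant-term lower bound for a sum of three exponentials, at height `4ε`. -/
lemma phi_main_bound (a b c ε x : ℝ) (ha : 1/2 ≤ ε*a)
    (hb : ε*b ≤ ε*a - Real.sqrt 3/2) (hc : ε*c ≤ ε*a - Real.sqrt 3/2) :
    1 ≤ ‖(Complex.exp (-Complex.I*(a:ℂ)*((x:ℂ)+(ε:ℂ)*4*Complex.I)) +
      Complex.exp (-Complex.I*(b:ℂ)*((x:ℂ)+(ε:ℂ)*4*Complex.I)) +
      Complex.exp (-Complex.I*(c:ℂ)*((x:ℂ)+(ε:ℂ)*4*Complex.I)))‖ := by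
  have habs : ∀ d : ℝ, ‖Complex.exp (-Complex.I*(d:ℂ)*((x:ℂ)+(ε:ℂ)*4*Complex.I))‖
      = Real.exp (ε*d*4) := by
    intro d
    rw [Complex.norm_exp]
    congr 1
    simp [Complex.mul_re, Complex.mul_im]; ring
  set A := Complex.exp (-Complex.I*(a:ℂ)*((x:ℂ)+(ε:ℂ)*4*Complex.I))
  set B := Complex.exp (-Complex.I*(b:ℂ)*((x:ℂ)+(ε:ℂ)*4*Complex.I))
  set C := Complex.exp (-Complex.I*(c:ℂ)*((x:ℂ)+(ε:ℂ)*4*Complex.I))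
  have tri : ‖A‖ - ‖B‖ - ‖C‖ ≤ ‖A+B+C‖ := by
    have h1 : ‖A‖ ≤ ‖A+B+C‖ + (‖B‖ + ‖C‖) := by
      calc ‖A‖ = ‖(A+B+C) + (-B + -C)‖ := by ring_nf
        _ ≤ ‖A+B+C‖ + ‖-B + -C‖ := norm_add_le _ _
        _ ≤ ‖A+B+C‖ + (‖-B‖ + ‖-C‖) := by
            linarith [norm_add_le (-B) (-C)]
        _ = ‖A+B+C‖ + (‖B‖ + ‖C‖) := by
            rw [norm_neg, norm_neg]
    linarith
  rw [habs a, habs b, habs c] at tri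
  have hsq : (3:ℝ)/2 ≤ Real.sqrt 3 := by
    rw [show (3:ℝ)/2 = Real.sqrt ((3/2)^2) by rw [Real.sqrt_sq]; norm_num]
    exact Real.sqrt_le_sqrt (by norm_num)
  have hEa : Real.exp 2 ≤ Real.exp (ε*a*4) := Real.exp_le_exp.mpr (by linarith)
  have hEb : Real.exp (ε*b*4) ≤ Real.exp (ε*a*4) * Real.exp (-3) := by
    rw [← Real.exp_add]; exact Real.exp_le_exp.mpr (by linarith)
  have hEc : Real.exp (ε*c*4) ≤ Real.exp (ε*a*4) * Real.exp (-3) := by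
    rw [← Real.exp_add]; exact Real.exp_le_exp.mpr (by linarith)
  have h2 : (3:ℝ) ≤ Real.exp 2 := by linarith [Real.add_one_le_exp (2:ℝ)]
  have h3 : Real.exp (-3:ℝ) ≤ 1/4 := by
    rw [Real.exp_neg, inv_le_comm₀ (Real.exp_pos 3) (by norm_num)]
    linarith [Real.add_one_le_exp (3:ℝ)]
  have hEpos : (0:ℝ) < Real.exp (ε*a*4) := Real.exp_pos _
  nlinarith [tri]

/-- There exists `H > 0` so that for each `θ` one of the two horizontal lines
`Im z = ±H` satisfies `|φ_θ| ≥ 1` along it. -/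
theorem phi_large_on_horizontal_line :
    ∃ H > (0 : ℝ), ∀ θ : ℝ, ∃ ε : ℝ, (ε = 1 ∨ ε = -1) ∧
      ∀ x : ℝ, 1 ≤ ‖phiE θ ((x : ℂ) + ε * H * Complex.I)‖ := by
  refine ⟨4, by norm_num, fun θ => ?_⟩
  have h1 : c₁ θ = Real.sin θ := by
    rw [c₁, Real.cos_sub]; simp
  have h2 : c₂ θ = -(Real.sqrt 3/2 * Real.cos θ + 1/2 * Real.sin θ) := by
    rw [c₂]
    have h : θ - 7*Real.pi/6 = (θ - Real.pi/6) - Real.pi := by ring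
    rw [h, Real.cos_sub_pi, Real.cos_sub, Real.cos_pi_div_six, Real.sin_pi_div_six]; ring
  have h3 : c₃ θ = Real.sqrt 3/2 * Real.cos θ - 1/2 * Real.sin θ := by
    rw [c₃, Real.cos_add, Real.cos_pi_div_six, Real.sin_pi_div_six]; ring
  have hs3 : Real.sqrt 3 ^ 2 = 3 := Real.sq_sqrt (by norm_num)
  have hpyth := Real.sin_sq_add_cos_sq θ
  have hsum : c₁ θ + c₂ θ + c₃ θ = 0 := by rw [h1, h2, h3]; ring
  have hsq : (c₁ θ)^2 + (c₂ θ)^2 + (c₃ θ)^2 = 3/2 := by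
    rw [h1, h2, h3]; nlinarith [hs3, hpyth]
  obtain ⟨ε, hε, hcase⟩ := phi_key _ _ _ hsum hsq
  refine ⟨ε, hε, fun x => ?_⟩
  have hz : ((x : ℂ) + (ε:ℝ) * (4:ℝ) * Complex.I) = ((x:ℂ) + (ε:ℂ)*4*Complex.I) := by
    push_cast; ring
  rw [phiE, hz]
  rcases hcase with ⟨ha,hb,hc⟩|⟨ha,hb,hc⟩|⟨ha,hb,hc⟩
  · exact phi_main_bound (c₁ θ) (c₂ θ) (c₃ θ) ε x ha hb hc
  · have e : Complex.exp (-Complex.I*((c₁ θ:ℝ):ℂ)*((x:ℂ)+(ε:ℂ)*4*Complex.I)) +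
        Complex.exp (-Complex.I*((c₂ θ:ℝ):ℂ)*((x:ℂ)+(ε:ℂ)*4*Complex.I)) +
        Complex.exp (-Complex.I*((c₃ θ:ℝ):ℂ)*((x:ℂ)+(ε:ℂ)*4*Complex.I)) =
        Complex.exp (-Complex.I*((c₂ θ:ℝ):ℂ)*((x:ℂ)+(ε:ℂ)*4*Complex.I)) +
        Complex.exp (-Complex.I*((c₁ θ:ℝ):ℂ)*((x:ℂ)+(ε:ℂ)*4*Complex.I)) +
        Complex.exp (-Complex.I*((c₃ θ:ℝ):ℂ)*((x:ℂ)+(ε:ℂ)*4*Complex.I)) := by ring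
    rw [e]
    exact phi_main_bound (c₂ θ) (c₁ θ) (c₃ θ) ε x ha hb hc
  · have e : Complex.exp (-Complex.I*((c₁ θ:ℝ):ℂ)*((x:ℂ)+(ε:ℂ)*4*Complex.I)) +
        Complex.exp (-Complex.I*((c₂ θ:ℝ):ℂ)*((x:ℂ)+(ε:ℂ)*4*Complex.I)) +
        Complex.exp (-Complex.I*((c₃ θ:ℝ):ℂ)*((x:ℂ)+(ε:ℂ)*4*Complex.I)) =
        Complex.exp (-Complex.I*((c₃ θ:ℝ):ℂ)*((x:ℂ)+(ε:ℂ)*4*Complex.I)) +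
        Complex.exp (-Complex.I*((c₁ θ:ℝ):ℂ)*((x:ℂ)+(ε:ℂ)*4*Complex.I)) +
        Complex.exp (-Complex.I*((c₂ θ:ℝ):ℂ)*((x:ℂ)+(ε:ℂ)*4*Complex.I)) := by ring
    rw [e]
    exact phi_main_bound (c₃ θ) (c₁ θ) (c₂ θ) ε x ha hb hc
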